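/- The uncorrelated-input statistical strength S_uc is a Bell nonlocality monotone: for every no-signaling behavior P in the (r,s) Bell scenario and every LOSR wiring W from the (r,s) scenario to the (r_f,s_f) scenario, S_uc(W(P)) ≤ S_uc(P); moreover S_uc(Q) = 0 for every local behavior Q. -/

import Mathlib

open scoped ENNReal
open Finset

/-- A probability distribution on a finite type. -/
def IsDist {Z : Type*} [Fintype Z] (p : Z → ℝ) : Prop :=
  (∀ z, 0 ≤ p z) ∧ ∑ z, p z = 1

/-- Relative entropy (Kullback-Leibler divergence) of finitely supported
distributions, valued in `[0,∞]`, with the conventions `0·log(0/t) = 0` and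
`S(p‖q) = ∞` whenever `q` vanishes at a point where `p` does not. -/
noncomputable def relEnt {Z : Type*} [Fintype Z] (p q : Z → ℝ) : ℝ≥0∞ :=
  if ∃ z, p z ≠ 0 ∧ q z = 0 then ⊤
  else ENNReal.ofReal (∑ z, p z * Real.log (p z / q z))

/-- A behavior in the (r,s) Bell scenario: `P a b x y = P(a,b|x,y)`. -/
def IsBehavior {r s : ℕ} (P : Fin r → Fin r → Fin s → Fin s → ℝ) : Prop :=
  (∀ a b x y, 0 ≤ P a b x y) ∧ ∀ x y, ∑ a, ∑ b, P a b x y = 1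

/-- The no-signaling conditions. -/
def NoSignaling {r s : ℕ} (P : Fin r → Fin r → Fin s → Fin s → ℝ) : Prop :=
  (∀ b x x' y, ∑ a, P a b x y = ∑ a, P a b x' y) ∧
  (∀ a x y y', ∑ b, P a b x y = ∑ b, P a b x y')

/-- Local (local-hidden-variable) behavior. -/
def IsLocal {r s : ℕ} (P : Fin r → Fin r → Fin s → Fin s → ℝ) : Prop :=
  ∃ (n : ℕ) (q : Fin n → ℝ) (PA : Fin r → Fin s → Fin n → ℝ)
    (PB : Fin r → Fin s → Fin n → ℝ),
    IsDist q ∧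
    (∀ x l, (∀ a, 0 ≤ PA a x l) ∧ ∑ a, PA a x l = 1) ∧
    (∀ y l, (∀ b, 0 ≤ PB b y l) ∧ ∑ b, PB b y l = 1) ∧
    (∀ a b x y, P a b x y = ∑ l, q l * PA a x l * PB b y l)

/-- Output distribution `P(·,·|x,y)` of a behavior for fixed inputs. -/
def outDist {r s : ℕ} (P : Fin r → Fin r → Fin s → Fin s → ℝ) (x y : Fin s) :
    Fin r × Fin r → ℝ := fun ab => P ab.1 ab.2 x y

/-- The behavior relative entropy `S_b(P‖P')`: the maximum over input pairs
`(x,y)` of the relative entropy of the output distributions. -/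
noncomputable def Sb {r s : ℕ} (P P' : Fin r → Fin r → Fin s → Fin s → ℝ) : ℝ≥0∞ :=
  Finset.univ.sup fun xy : Fin s × Fin s =>
    relEnt (outDist P xy.1 xy.2) (outDist P' xy.1 xy.2)

/-- A global wiring from the (r,s) scenario to the (rf,sf) scenario. -/
structure GlobalWiring (r s rf sf : ℕ) where
  I : Fin s → Fin s → Fin sf → Fin sf → ℝ          -- I x y χ ψ  =  I(x,y|χ,ψ)
  O : Fin rf → Fin rf → Fin r → Fin r → Fin s → Fin s → Fin sf → Fin sf → ℝ
    -- O α β a b x y χ ψ  =  O(α,β|a,b,x,y,χ,ψ)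
  I_nonneg : ∀ x y χ ψ, 0 ≤ I x y χ ψ
  I_sum : ∀ χ ψ, ∑ x, ∑ y, I x y χ ψ = 1
  O_nonneg : ∀ α β a b x y χ ψ, 0 ≤ O α β a b x y χ ψ
  O_sum : ∀ a b x y χ ψ, ∑ α, ∑ β, O α β a b x y χ ψ = 1

/-- Action of a global wiring on a behavior. -/
noncomputable def GlobalWiring.apply {r s rf sf : ℕ} (W : GlobalWiring r s rf sf)
    (P : Fin r → Fin r → Fin s → Fin s → ℝ) :
    Fin rf → Fin rf → Fin sf → Fin sf → ℝ :=
  fun α β χ ψ => ∑ a, ∑ b, ∑ x, ∑ y,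
    W.O α β a b x y χ ψ * P a b x y * W.I x y χ ψ

/-- LOSR wiring: a global wiring whose input and output boxes are local. -/
def GlobalWiring.IsLOSR {r s rf sf : ℕ} (W : GlobalWiring r s rf sf) : Prop :=
  ∃ (n m : ℕ) (q : Fin n → ℝ) (q' : Fin m → ℝ)
    (IA : Fin s → Fin sf → Fin n → ℝ) (IB : Fin s → Fin sf → Fin n → ℝ)
    (OA : Fin rf → Fin r → Fin s → Fin sf → Fin m → ℝ)
    (OB : Fin rf → Fin r → Fin s → Fin sf → Fin m → ℝ),
    IsDist q ∧ IsDist q' ∧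
    (∀ χ l, (∀ x, 0 ≤ IA x χ l) ∧ ∑ x, IA x χ l = 1) ∧
    (∀ ψ l, (∀ y, 0 ≤ IB y ψ l) ∧ ∑ y, IB y ψ l = 1) ∧
    (∀ a x χ u, (∀ α, 0 ≤ OA α a x χ u) ∧ ∑ α, OA α a x χ u = 1) ∧
    (∀ b y ψ u, (∀ β, 0 ≤ OB β b y ψ u) ∧ ∑ β, OB β b y ψ u = 1) ∧
    (∀ x y χ ψ, W.I x y χ ψ = ∑ l, q l * IA x χ l * IB y ψ l) ∧
    (∀ α β a b x y χ ψ,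
      W.O α β a b x y χ ψ = ∑ u, q' u * OA α a x χ u * OB β b y ψ u)

/-- UCLOSR wiring: a global wiring whose input and output boxes are products. -/
def GlobalWiring.IsUCLOSR {r s rf sf : ℕ} (W : GlobalWiring r s rf sf) : Prop :=
  ∃ (IA : Fin s → Fin sf → ℝ) (IB : Fin s → Fin sf → ℝ)
    (OA : Fin rf → Fin r → Fin s → Fin sf → ℝ)
    (OB : Fin rf → Fin r → Fin s → Fin sf → ℝ),
    (∀ χ, (∀ x, 0 ≤ IA x χ) ∧ ∑ x, IA x χ = 1) ∧
    (∀ ψ, (∀ y, 0 ≤ IB y ψ) ∧ ∑ y, IB y ψ = 1) ∧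
    (∀ a x χ, (∀ α, 0 ≤ OA α a x χ) ∧ ∑ α, OA α a x χ = 1) ∧
    (∀ b y ψ, (∀ β, 0 ≤ OB β b y ψ) ∧ ∑ β, OB β b y ψ = 1) ∧
    (∀ x y χ ψ, W.I x y χ ψ = IA x χ * IB y ψ) ∧
    (∀ α β a b x y χ ψ, W.O α β a b x y χ ψ = OA α a x χ * OB β b y ψ)

/-- The relative entropy of nonlocality `S_nl`. -/
noncomputable def Snl {r s : ℕ} (P : Fin r → Fin r → Fin s → Fin s → ℝ) : ℝ≥0∞ :=
  ⨅ (Q : Fin r → Fin r → Fin s → Fin s → ℝ) (_ : IsBehavior Q ∧ IsLocal Q), Sb P Q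

/-- The uniform-input statistical strength `S_u`. -/
noncomputable def Su {r s : ℕ} (P : Fin r → Fin r → Fin s → Fin s → ℝ) : ℝ≥0∞ :=
  ⨅ (Q : Fin r → Fin r → Fin s → Fin s → ℝ) (_ : IsBehavior Q ∧ IsLocal Q),
    ((s : ℝ≥0∞) ^ 2)⁻¹ * ∑ x, ∑ y, relEnt (outDist P x y) (outDist Q x y)

/-- The uncorrelated-input statistical strength `S_uc`. -/
noncomputable def Suc {r s : ℕ} (P : Fin r → Fin r → Fin s → Fin s → ℝ) : ℝ≥0∞ :=
  ⨆ (DA : Fin s → ℝ) (DB : Fin s → ℝ) (_ : IsDist DA ∧ IsDist DB),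
    ⨅ (Q : Fin r → Fin r → Fin s → Fin s → ℝ) (_ : IsBehavior Q ∧ IsLocal Q),
      ∑ x, ∑ y, ENNReal.ofReal (DA x * DB y) *
        relEnt (outDist P x y) (outDist Q x y)

/-!
An LOSR wiring is a mixture, over its shared randomness, of wirings whose boxes are products.
For a product wiring and a product input distribution `D_A ⊗ D_B` on the new inputs, the
induced distribution of the old inputs is again a product `D_A' ⊗ D_B'`, and the wiring maps
local models to local models. Joint convexity and data processing of relative entropy bound
the `D`-average of `S(W P ‖ W Q)` by the `D'`-average of `S(P ‖ Q)`, so product wirings do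
not increase `S_uc`. For a mixture, mixing near-optimal local models of the components and
using joint convexity once more shows that `S_uc` of the mixture is at most the largest `S_uc`
of a component. A local behavior is its own local model, so its `S_uc` vanishes.
-/

open Real

theorem log_sum_inequality {ι : Type*} [Fintype ι] {a b : ι → ℝ}
    (ha : ∀ i, 0 ≤ a i) (hb : ∀ i, 0 ≤ b i) (hab : ∀ i, b i = 0 → a i = 0) :
    (∑ i, a i) * log ((∑ i, a i) / ∑ i, b i) ≤ ∑ i, a i * log (a i / b i) := by
  have hcancel : ∀ i, b i * (a i / b i) = a i := fun i => by
    rcases eq_or_ne (b i) 0 with h | h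
    · simp [h, hab i h]
    · exact mul_div_cancel₀ _ h
  rcases (sum_nonneg fun i _ => hb i).eq_or_lt with hB | hB
  · have hb0 : ∀ i, b i = 0 := fun i =>
      (sum_eq_zero_iff_of_nonneg fun i _ => hb i).mp hB.symm i (mem_univ i)
    simp [← hB, hab _ (hb0 _)]
  set B := ∑ i, b i
  have hJensen := convexOn_mul_log.map_sum_le (t := univ) (w := fun i => b i / B)
    (p := fun i => a i / b i) (fun i _ => div_nonneg (hb i) hB.le)
    (by rw [← sum_div, div_self hB.ne']) (fun i _ => div_nonneg (ha i) (hb i))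
  have hmean : ∑ i, b i / B * (a i / b i) = (∑ i, a i) / B := by
    rw [sum_div]
    exact sum_congr rfl fun i _ => by rw [div_mul_eq_mul_div, hcancel]
  have hrhs : ∑ i, b i / B * (a i / b i * log (a i / b i)) =
      (∑ i, a i * log (a i / b i)) / B := by
    rw [sum_div]
    exact sum_congr rfl fun i _ => by rw [div_mul_eq_mul_div, ← mul_assoc, hcancel]
  simp only [smul_eq_mul, hmean, hrhs] at hJensen
  calc (∑ i, a i) * log ((∑ i, a i) / B)
      = B * ((∑ i, a i) / B * log ((∑ i, a i) / B)) := by field_simp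
    _ ≤ B * ((∑ i, a i * log (a i / b i)) / B) := by gcongr
    _ = ∑ i, a i * log (a i / b i) := mul_div_cancel₀ _ hB.ne'

section Dist

variable {Z Z' : Type*} [Fintype Z] [Fintype Z']

theorem IsDist.map {p : Z → ℝ} (hp : IsDist p) {T : Z → Z' → ℝ}
    (hT : ∀ z, IsDist (T z)) :
    IsDist fun w => ∑ z, p z * T z w :=
  ⟨fun w => sum_nonneg fun z _ => mul_nonneg (hp.1 z) ((hT z).1 w), by
    rw [sum_comm]; simp [← mul_sum, (hT _).2, hp.2]⟩

theorem IsDist.prod {p : Z → ℝ} {q : Z' → ℝ} (hp : IsDist p) (hq : IsDist q) :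
    IsDist fun z : Z × Z' => p z.1 * q z.2 :=
  ⟨fun z => mul_nonneg (hp.1 _) (hq.1 _), by
    simp only [Fintype.sum_prod_type, ← mul_sum, hq.2, mul_one, hp.2]⟩

end Dist

theorem sum_sum_sum_sum_comm {M α β γ δ : Type*} [AddCommMonoid M] [Fintype α] [Fintype β]
    [Fintype γ] [Fintype δ] (f : α → β → γ → δ → M) :
    ∑ a, ∑ b, ∑ c, ∑ d, f a b c d = ∑ c, ∑ d, ∑ a, ∑ b, f a b c d := by
  calc ∑ a, ∑ b, ∑ c, ∑ d, f a b c d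
        = ∑ ab : α × β, ∑ cd : γ × δ, f ab.1 ab.2 cd.1 cd.2 := by
        simp only [Fintype.sum_prod_type]
    _ = ∑ cd : γ × δ, ∑ ab : α × β, f ab.1 ab.2 cd.1 cd.2 := sum_comm
    _ = ∑ c, ∑ d, ∑ a, ∑ b, f a b c d := by simp only [Fintype.sum_prod_type]

section RelativeEntropy

variable {Z : Type*} [Fintype Z]

theorem relEnt_eq_top {p q : Z → ℝ} (h : ∃ z, p z ≠ 0 ∧ q z = 0) : relEnt p q = ⊤ :=
  if_pos h

theorem relEnt_eq_ofReal {p q : Z → ℝ} (h : ∀ z, q z = 0 → p z = 0) :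
    relEnt p q = ENNReal.ofReal (∑ z, p z * log (p z / q z)) :=
  if_neg fun ⟨z, hp, hq⟩ => hp (h z hq)

@[simp]
theorem relEnt_self (p : Z → ℝ) : relEnt p p = 0 := by
  rw [relEnt_eq_ofReal fun _ => id]
  simp

theorem ofReal_le_relEnt (p q : Z → ℝ) :
    ENNReal.ofReal (∑ z, p z * log (p z / q z)) ≤ relEnt p q := by
  unfold relEnt
  split_ifs <;> simp

theorem relEnt_map_le {Z' : Type*} [Fintype Z'] {T : Z → Z' → ℝ} (hT : ∀ z, IsDist (T z))
    {p q : Z → ℝ} (hp : ∀ z, 0 ≤ p z) (hq : ∀ z, 0 ≤ q z) :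
    relEnt (fun w => ∑ z, p z * T z w) (fun w => ∑ z, q z * T z w) ≤ relEnt p q := by
  by_cases hac : ∀ z, q z = 0 → p z = 0
  swap
  · push Not at hac
    obtain ⟨z, hqz, hpz⟩ := hac
    simp [relEnt_eq_top ⟨z, hpz, hqz⟩]
  have hac' : ∀ w, ∑ z, q z * T z w = 0 → ∑ z, p z * T z w = 0 := fun w h => by
    rw [sum_eq_zero_iff_of_nonneg fun z _ => mul_nonneg (hq z) ((hT z).1 w)] at h
    refine sum_eq_zero fun z hz => ?_
    rcases mul_eq_zero.mp (h z hz) with h | h <;> simp [h, hac]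
  have hterm : ∀ z w, p z * T z w * log (p z * T z w / (q z * T z w)) =
      p z * log (p z / q z) * T z w := fun z w => by
    rcases eq_or_ne (T z w) 0 with h | h
    · simp [h]
    · rw [mul_div_mul_right _ _ h]; ring
  rw [relEnt_eq_ofReal hac, relEnt_eq_ofReal hac']
  gcongr
  calc ∑ w, (∑ z, p z * T z w) * log ((∑ z, p z * T z w) / ∑ z, q z * T z w)
      ≤ ∑ w, ∑ z, p z * T z w * log (p z * T z w / (q z * T z w)) :=
        sum_le_sum fun w _ => log_sum_inequality (fun z => mul_nonneg (hp z) ((hT z).1 w))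
          (fun z => mul_nonneg (hq z) ((hT z).1 w))
          (fun z h => by rcases mul_eq_zero.mp h with h | h <;> simp [h, hac])
    _ = ∑ z, p z * log (p z / q z) := by
        rw [sum_comm]
        simp_rw [hterm, ← mul_sum, (hT _).2, mul_one]

theorem relEnt_weighted_prod_le {ι : Type*} [Fintype ι] {c : ι → ℝ} (hc : ∀ i, 0 ≤ c i)
    (p q : ι → Z → ℝ) :
    relEnt (fun iz : ι × Z => c iz.1 * p iz.1 iz.2) (fun iz => c iz.1 * q iz.1 iz.2) ≤
      ∑ i, ENNReal.ofReal (c i) * relEnt (p i) (q i) := by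
  by_cases hac : ∀ iz : ι × Z, c iz.1 * q iz.1 iz.2 = 0 → c iz.1 * p iz.1 iz.2 = 0
  swap
  · push Not at hac
    obtain ⟨⟨i, z⟩, hqz, hpz⟩ := hac
    have hci : c i ≠ 0 := left_ne_zero_of_mul hpz
    have hinf : relEnt (p i) (q i) = ⊤ :=
      relEnt_eq_top ⟨z, right_ne_zero_of_mul hpz, (mul_eq_zero.mp hqz).resolve_left hci⟩
    refine le_top.trans_eq (ENNReal.sum_eq_top.mpr ⟨i, mem_univ i, ?_⟩).symm
    simp [hinf, (hc i).lt_of_ne' hci]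
  have hsplit : ∀ i z, c i * p i z * log (c i * p i z / (c i * q i z)) =
      c i * (p i z * log (p i z / q i z)) := fun i z => by
    rcases eq_or_ne (c i) 0 with h | h
    · simp [h]
    · rw [mul_div_mul_left _ _ h]; ring
  rw [relEnt_eq_ofReal hac, Fintype.sum_prod_type]
  simp_rw [hsplit, ← mul_sum]
  calc ENNReal.ofReal (∑ i, c i * ∑ z, p i z * log (p i z / q i z))
      ≤ ∑ i, ENNReal.ofReal (c i * ∑ z, p i z * log (p i z / q i z)) :=
        le_sum_of_subadditive _ ENNReal.ofReal_zero.le (fun _ _ => ENNReal.ofReal_add_le) _ _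
    _ ≤ ∑ i, ENNReal.ofReal (c i) * relEnt (p i) (q i) := by
        gcongr with i
        rw [ENNReal.ofReal_mul (hc i)]
        gcongr
        exact ofReal_le_relEnt _ _

theorem relEnt_sum_le {ι : Type*} [Fintype ι] {c : ι → ℝ} (hc : ∀ i, 0 ≤ c i)
    {p q : ι → Z → ℝ} (hp : ∀ i z, 0 ≤ p i z) (hq : ∀ i z, 0 ≤ q i z) :
    relEnt (fun z => ∑ i, c i * p i z) (fun z => ∑ i, c i * q i z) ≤
      ∑ i, ENNReal.ofReal (c i) * relEnt (p i) (q i) := by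
  classical
  have hmarginal : ∀ (r : ι → Z → ℝ) z, ∑ i, c i * r i z =
      ∑ iz : ι × Z, c iz.1 * r iz.1 iz.2 * if iz.2 = z then 1 else 0 := fun r z => by
    simp [Fintype.sum_prod_type]
  simp_rw [hmarginal]
  refine (relEnt_map_le (fun iz => ⟨fun z => by positivity, by simp⟩)
    (fun iz => mul_nonneg (hc _) (hp _ _)) (fun iz => mul_nonneg (hc _) (hq _ _))).trans ?_
  exact relEnt_weighted_prod_le hc p q

end RelativeEntropy

abbrev Behavior (r s : ℕ) := Fin r → Fin r → Fin s → Fin s → ℝ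

section Bell

variable {r s rf sf : ℕ}

theorem isBehavior_iff_isDist_outDist {P : Behavior r s} :
    IsBehavior P ↔ ∀ x y, IsDist (outDist P x y) := by
  simp only [IsDist, outDist, Fintype.sum_prod_type]
  exact ⟨fun h x y => ⟨fun ab => h.1 _ _ x y, h.2 x y⟩,
    fun h => ⟨fun a b x y => (h x y).1 (a, b), fun x y => (h x y).2⟩⟩

theorem isLocal_of_fintype {Λ : Type*} [Fintype Λ] {P : Behavior r s} {q : Λ → ℝ}
    (hq : IsDist q) {PA PB : Fin r → Fin s → Λ → ℝ}
    (hPA : ∀ x l, IsDist fun a => PA a x l) (hPB : ∀ y l, IsDist fun b => PB b y l)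
    (hP : ∀ a b x y, P a b x y = ∑ l, q l * PA a x l * PB b y l) :
    IsLocal P := by
  let e := (Fintype.equivFin Λ).symm
  refine ⟨Fintype.card Λ, q ∘ e, fun a x i => PA a x (e i), fun b y i => PB b y (e i),
    ⟨fun i => hq.1 _, ?_⟩, fun x i => hPA x _, fun y i => hPB y _, fun a b x y => ?_⟩
  · rw [← hq.2]
    exact e.sum_comp q
  · rw [hP]
    exact (e.sum_comp fun l => q l * PA a x l * PB b y l).symm

noncomputable def avgRelEnt (DA DB : Fin s → ℝ) (P Q : Behavior r s) : ℝ≥0∞ :=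
  ∑ x, ∑ y, ENNReal.ofReal (DA x * DB y) * relEnt (outDist P x y) (outDist Q x y)

theorem iInf_avgRelEnt_le_Suc (P : Behavior r s) {DA DB : Fin s → ℝ}
    (hDA : IsDist DA) (hDB : IsDist DB) :
    ⨅ (Q : Behavior r s) (_ : IsBehavior Q ∧ IsLocal Q), avgRelEnt DA DB P Q ≤ Suc P :=
  le_iSup₂_of_le DA DB (le_iSup_of_le ⟨hDA, hDB⟩ le_rfl)

theorem Suc_le {P : Behavior r s} {S : ℝ≥0∞}
    (h : ∀ DA DB : Fin s → ℝ, IsDist DA → IsDist DB →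
      ⨅ (Q : Behavior r s) (_ : IsBehavior Q ∧ IsLocal Q), avgRelEnt DA DB P Q ≤ S) :
    Suc P ≤ S :=
  iSup₂_le fun DA DB => iSup_le fun hD => h DA DB hD.1 hD.2

theorem exists_avgRelEnt_lt_of_Suc_lt {P : Behavior r s} {t : ℝ≥0∞} (ht : Suc P < t)
    {DA DB : Fin s → ℝ} (hDA : IsDist DA) (hDB : IsDist DB) :
    ∃ Q, (IsBehavior Q ∧ IsLocal Q) ∧ avgRelEnt DA DB P Q < t := by
  simpa only [iInf_lt_iff, exists_prop] using (iInf_avgRelEnt_le_Suc P hDA hDB).trans_lt ht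

theorem Suc_eq_zero_of_isLocal {Q : Behavior r s} (hQ : IsBehavior Q) (hQl : IsLocal Q) :
    Suc Q = 0 :=
  nonpos_iff_eq_zero.mp <| Suc_le fun DA DB _ _ =>
    (iInf₂_le Q ⟨hQ, hQl⟩).trans_eq (by simp [avgRelEnt])

def mixture {ι : Type*} [Fintype ι] (c : ι → ℝ) (P : ι → Behavior r s) : Behavior r s :=
  fun a b x y => ∑ i, c i * P i a b x y

section Mixture

variable {ι : Type*} [Fintype ι] {c : ι → ℝ} {P : ι → Behavior r s}

theorem IsBehavior.mixture (hc : IsDist c) (hP : ∀ i, IsBehavior (P i)) :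
    IsBehavior (mixture c P) :=
  isBehavior_iff_isDist_outDist.mpr fun x y =>
    hc.map fun i => isBehavior_iff_isDist_outDist.mp (hP i) x y

theorem IsLocal.mixture (hc : IsDist c) (hP : ∀ i, IsLocal (P i)) :
    IsLocal (mixture c P) := by
  choose n t PA PB ht hPA hPB hrep using hP
  refine isLocal_of_fintype (Λ := Σ i, Fin (n i)) (q := fun l => c l.1 * t l.1 l.2)
    ⟨fun l => mul_nonneg (hc.1 _) ((ht _).1 _), ?_⟩
    (fun x l => hPA l.1 x l.2) (fun y l => hPB l.1 y l.2) fun a b x y => ?_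
  · simp [Fintype.sum_sigma, ← mul_sum, (ht _).2, hc.2]
  · simp [_root_.mixture, Fintype.sum_sigma, hrep, mul_sum, mul_assoc]

theorem avgRelEnt_mixture_le (hc : ∀ i, 0 ≤ c i) {Q : ι → Behavior r s}
    (hP : ∀ i, IsBehavior (P i)) (hQ : ∀ i, IsBehavior (Q i)) (DA DB : Fin s → ℝ) :
    avgRelEnt DA DB (mixture c P) (mixture c Q) ≤
      ∑ i, ENNReal.ofReal (c i) * avgRelEnt DA DB (P i) (Q i) := by
  calc avgRelEnt DA DB (mixture c P) (mixture c Q)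
      ≤ ∑ x, ∑ y, ENNReal.ofReal (DA x * DB y) *
          ∑ i, ENNReal.ofReal (c i) * relEnt (outDist (P i) x y) (outDist (Q i) x y) := by
        unfold avgRelEnt
        gcongr with x _ y
        exact relEnt_sum_le hc (fun i _ => (hP i).1 _ _ _ _) (fun i _ => (hQ i).1 _ _ _ _)
    _ = ∑ i, ENNReal.ofReal (c i) * avgRelEnt DA DB (P i) (Q i) := by
        simp_rw [avgRelEnt, mul_sum, mul_left_comm (ENNReal.ofReal (DA _ * DB _))]
        rw [sum_congr rfl fun x _ => sum_comm, sum_comm]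

theorem Suc_mixture_le (hc : IsDist c) (hP : ∀ i, IsBehavior (P i)) {S : ℝ≥0∞}
    (hS : ∀ i, Suc (P i) ≤ S) : Suc (mixture c P) ≤ S := by
  refine Suc_le fun DA DB hDA hDB => ENNReal.le_of_forall_pos_le_add fun ε hε hS_lt => ?_
  have hlt : ∀ i, Suc (P i) < S + ε := fun i =>
    (hS i).trans_lt (ENNReal.lt_add_right hS_lt.ne (by exact_mod_cast hε.ne'))
  choose Q hQ hQlt using fun i => exists_avgRelEnt_lt_of_Suc_lt (hlt i) hDA hDB
  calc ⨅ (Q : Behavior r s) (_ : IsBehavior Q ∧ IsLocal Q), avgRelEnt DA DB (mixture c P) Q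
      ≤ avgRelEnt DA DB (mixture c P) (mixture c Q) :=
        iInf₂_le _ ⟨.mixture hc fun i => (hQ i).1, .mixture hc fun i => (hQ i).2⟩
    _ ≤ ∑ i, ENNReal.ofReal (c i) * avgRelEnt DA DB (P i) (Q i) :=
        avgRelEnt_mixture_le hc.1 hP (fun i => (hQ i).1) DA DB
    _ ≤ ∑ i, ENNReal.ofReal (c i) * (S + ε) := by gcongr with i; exact (hQlt i).le
    _ = S + ε := by
        rw [← sum_mul, ← ENNReal.ofReal_sum_of_nonneg fun i _ => hc.1 i, hc.2,
          ENNReal.ofReal_one, one_mul]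

end Mixture

/-- A wiring without shared randomness, its boxes indexed as in `GlobalWiring`. -/
structure ProdWiring (r s rf sf : ℕ) where
  IA : Fin s → Fin sf → ℝ
  IB : Fin s → Fin sf → ℝ
  OA : Fin rf → Fin r → Fin s → Fin sf → ℝ
  OB : Fin rf → Fin r → Fin s → Fin sf → ℝ
  IA_dist : ∀ χ, IsDist fun x => IA x χ
  IB_dist : ∀ ψ, IsDist fun y => IB y ψ
  OA_dist : ∀ a x χ, IsDist fun α => OA α a x χ
  OB_dist : ∀ b y ψ, IsDist fun β => OB β b y ψ

namespace ProdWiring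

variable (V : ProdWiring r s rf sf)

def apply (P : Behavior r s) : Behavior rf sf :=
  fun α β χ ψ => ∑ x, ∑ y, V.IA x χ * V.IB y ψ *
    ∑ a, ∑ b, V.OA α a x χ * V.OB β b y ψ * P a b x y

theorem outDist_apply (P : Behavior r s) (χ ψ : Fin sf) :
    outDist (V.apply P) χ ψ = fun w =>
      ∑ xy : Fin s × Fin s, V.IA xy.1 χ * V.IB xy.2 ψ *
        ∑ ab : Fin r × Fin r,
          outDist P xy.1 xy.2 ab * (V.OA w.1 ab.1 xy.1 χ * V.OB w.2 ab.2 xy.2 ψ) := by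
  funext w
  simp only [outDist, apply, Fintype.sum_prod_type, mul_comm (P _ _ _ _)]

theorem isDist_OA_mul_OB (ab : Fin r × Fin r) (xy : Fin s × Fin s) (χ ψ : Fin sf) :
    IsDist fun w : Fin rf × Fin rf => V.OA w.1 ab.1 xy.1 χ * V.OB w.2 ab.2 xy.2 ψ :=
  (V.OA_dist ab.1 xy.1 χ).prod (V.OB_dist ab.2 xy.2 ψ)

theorem isBehavior_apply {P : Behavior r s} (hP : IsBehavior P) : IsBehavior (V.apply P) := by
  rw [isBehavior_iff_isDist_outDist] at hP ⊢
  intro χ ψ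
  rw [outDist_apply]
  exact ((V.IA_dist χ).prod (V.IB_dist ψ)).map fun xy =>
    (hP xy.1 xy.2).map fun ab => V.isDist_OA_mul_OB ab xy χ ψ

theorem isLocal_apply {Q : Behavior r s} (hQ : IsLocal Q) : IsLocal (V.apply Q) := by
  obtain ⟨n, t, QA, QB, ht, hQA, hQB, hrep⟩ := hQ
  refine isLocal_of_fintype ht
    (PA := fun α χ l => ∑ x, V.IA x χ * ∑ a, QA a x l * V.OA α a x χ)
    (PB := fun β ψ l => ∑ y, V.IB y ψ * ∑ b, QB b y l * V.OB β b y ψ)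
    (fun χ l => (V.IA_dist χ).map fun x => IsDist.map (hQA x l) fun a => V.OA_dist a x χ)
    (fun ψ l => (V.IB_dist ψ).map fun y => IsDist.map (hQB y l) fun b => V.OB_dist b y ψ)
    fun α β χ ψ => ?_
  simp only [apply, hrep, mul_sum, sum_mul]
  simp_rw [sum_comm (t := (univ : Finset (Fin n)))]
  refine sum_congr rfl fun l _ => ?_
  conv_rhs => rw [sum_sum_sum_sum_comm]
  refine sum_congr rfl fun x _ => ?_
  rw [sum_comm]
  exact sum_congr rfl fun a _ => sum_congr rfl fun y _ =>
    sum_congr rfl fun b _ => by ring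

theorem relEnt_apply_le {P Q : Behavior r s} (hP : IsBehavior P) (hQ : IsBehavior Q)
    (χ ψ : Fin sf) :
    relEnt (outDist (V.apply P) χ ψ) (outDist (V.apply Q) χ ψ) ≤
      ∑ x, ∑ y, ENNReal.ofReal (V.IA x χ * V.IB y ψ) *
        relEnt (outDist P x y) (outDist Q x y) := by
  rw [isBehavior_iff_isDist_outDist] at hP hQ
  have hT := fun xy ab => V.isDist_OA_mul_OB ab xy χ ψ
  rw [outDist_apply, outDist_apply, ← Fintype.sum_prod_type']
  refine (relEnt_sum_le (fun xy => ((V.IA_dist χ).prod (V.IB_dist ψ)).1 xy)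
    (fun xy => ((hP _ _).map (hT xy)).1) (fun xy => ((hQ _ _).map (hT xy)).1)).trans ?_
  gcongr with xy
  exact relEnt_map_le (hT xy) (hP _ _).1 (hQ _ _).1

theorem avgRelEnt_apply_le {P Q : Behavior r s} (hP : IsBehavior P) (hQ : IsBehavior Q)
    {DA DB : Fin sf → ℝ} (hDA : ∀ χ, 0 ≤ DA χ) (hDB : ∀ ψ, 0 ≤ DB ψ) :
    avgRelEnt DA DB (V.apply P) (V.apply Q) ≤
      avgRelEnt (fun x => ∑ χ, DA χ * V.IA x χ) (fun y => ∑ ψ, DB ψ * V.IB y ψ) P Q := by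
  have hA : ∀ x χ, 0 ≤ DA χ * V.IA x χ := fun x χ =>
    mul_nonneg (hDA χ) ((V.IA_dist χ).1 x)
  have hB : ∀ y ψ, 0 ≤ DB ψ * V.IB y ψ := fun y ψ =>
    mul_nonneg (hDB ψ) ((V.IB_dist ψ).1 y)
  calc avgRelEnt DA DB (V.apply P) (V.apply Q)
      ≤ ∑ χ, ∑ ψ, ENNReal.ofReal (DA χ * DB ψ) * ∑ x, ∑ y,
          ENNReal.ofReal (V.IA x χ * V.IB y ψ) * relEnt (outDist P x y) (outDist Q x y) := by
        unfold avgRelEnt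
        gcongr with χ _ ψ
        exact V.relEnt_apply_le hP hQ χ ψ
    _ = _ := by
        rw [avgRelEnt]
        conv_lhs => simp only [mul_sum]
        rw [sum_sum_sum_sum_comm]
        refine sum_congr rfl fun x _ => sum_congr rfl fun y _ => ?_
        rw [ENNReal.ofReal_mul (sum_nonneg fun χ _ => hA x χ),
          ENNReal.ofReal_sum_of_nonneg fun χ _ => hA x χ,
          ENNReal.ofReal_sum_of_nonneg fun ψ _ => hB y ψ, sum_mul_sum, sum_mul]
        refine sum_congr rfl fun χ _ => ?_
        rw [sum_mul]
        refine sum_congr rfl fun ψ _ => ?_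
        have hIA0 : 0 ≤ V.IA x χ := (V.IA_dist χ).1 x
        simp only [ENNReal.ofReal_mul (hDA _), ENNReal.ofReal_mul (hDB _),
          ENNReal.ofReal_mul hIA0]
        ring

theorem Suc_apply_le {P : Behavior r s} (hP : IsBehavior P) : Suc (V.apply P) ≤ Suc P := by
  refine Suc_le fun DA DB hDA hDB => le_trans ?_
    (iInf_avgRelEnt_le_Suc P (hDA.map V.IA_dist) (hDB.map V.IB_dist))
  exact le_iInf₂ fun Q hQ =>
    (iInf₂_le _ ⟨V.isBehavior_apply hQ.1, V.isLocal_apply hQ.2⟩).trans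
    (V.avgRelEnt_apply_le hP hQ.1 hDA.1 hDB.1)

end ProdWiring

theorem GlobalWiring.IsLOSR.exists_mixture_prodWiring {W : GlobalWiring r s rf sf}
    (hW : W.IsLOSR) :
    ∃ (ι : Type) (_ : Fintype ι) (c : ι → ℝ) (V : ι → ProdWiring r s rf sf),
      IsDist c ∧ ∀ P, W.apply P = mixture c fun i => (V i).apply P := by
  obtain ⟨n, m, q, q', IA, IB, OA, OB, hq, hq', hIA, hIB, hOA, hOB, hI, hO⟩ := hW
  refine ⟨Fin n × Fin m, inferInstance, fun k => q k.1 * q' k.2,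
    fun k => ⟨fun x χ => IA x χ k.1, fun y ψ => IB y ψ k.1, fun α a x χ => OA α a x χ k.2,
      fun β b y ψ => OB β b y ψ k.2, fun χ => hIA χ k.1, fun ψ => hIB ψ k.1,
      fun a x χ => hOA a x χ k.2, fun b y ψ => hOB b y ψ k.2⟩, hq.prod hq', fun P => ?_⟩
  funext α β χ ψ
  simp only [GlobalWiring.apply, mixture, ProdWiring.apply, hI, hO, Fintype.sum_prod_type,
    mul_sum, sum_mul]
  simp_rw [sum_comm (t := (univ : Finset (Fin n))), sum_comm (t := (univ : Finset (Fin m)))]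
  refine sum_congr rfl fun u _ => sum_congr rfl fun l _ => ?_
  rw [sum_sum_sum_sum_comm]
  exact sum_congr rfl fun x _ => sum_congr rfl fun y _ => sum_congr rfl fun a _ =>
    sum_congr rfl fun b _ => by ring

end Bell

theorem Suc_Bell_monotone_general {r s rf sf : ℕ}
    (P : Fin r → Fin r → Fin s → Fin s → ℝ)
    (hP : IsBehavior P)
    (W : GlobalWiring r s rf sf) (hW : W.IsLOSR) :
    Suc (W.apply P) ≤ Suc P ∧
      ∀ Q : Fin r → Fin r → Fin s → Fin s → ℝ,
        IsBehavior Q → IsLocal Q → Suc Q = 0 := by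
  refine ⟨?_, fun Q hQ hQl => Suc_eq_zero_of_isLocal hQ hQl⟩
  obtain ⟨ι, _, c, V, hc, hW⟩ := hW.exists_mixture_prodWiring
  rw [hW]
  exact Suc_mixture_le hc (fun i => (V i).isBehavior_apply hP) fun i => (V i).Suc_apply_le hP

/-- the uncorrelated-input statistical strength `S_uc` is a Bell
nonlocality monotone. -/
theorem Suc_Bell_monotone {r s rf sf : ℕ} (hrf : 0 < rf)
    (P : Fin r → Fin r → Fin s → Fin s → ℝ)
    (hP : IsBehavior P) (hPns : NoSignaling P)
    (W : GlobalWiring r s rf sf) (hW : W.IsLOSR) :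
    Suc (W.apply P) ≤ Suc P ∧
      ∀ Q : Fin r → Fin r → Fin s → Fin s → ℝ,
        IsBehavior Q → IsLocal Q → Suc Q = 0 :=
  Suc_Bell_monotone_general P hP W hW
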